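/- Let M be a smooth manifold with a 1-form λ, let H = H(t,y) be a smooth function, and let X_H be a time-dependent vector field with λ(X_H) = -H. For each t ∈ [0,1] let φ_t be a diffeomorphism of M, the flow φ_t being generated so that for any smooth curve γ: [0,1] → M the curve γ̄(t) = φ_t^{-1}(γ(t)) satisfies dγ̄/dt = d(φ_t)^{-1}(γ̇(t) - X_H(t,γ(t))), and let g_t be the conformal exponent of φ_t^{-1}, i.e. (φ_t^{-1})^* λ = e^{g_t} λ for a smooth function g_t. Then for any smooth curve γ: [0,1] → M one has λ(dγ̄/dt) = e^{g_t ∘ γ(t)} · (λ(γ̇(t)) + H(t,γ(t))) at each t. Consequently, γ satisfies λ(γ̇(t)) + H(t,γ(t)) = 0 for all t if and only if γ̄ is horizontal, i.e., λ(dγ̄/dt) = 0 for all t. -/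
import Mathlib

/-- Gauge transformation of the Carnot constraint (chart-level formulation on a normed
space `E`): let `lam` be the contact form, `H` a contact Hamiltonian with vector field
`X` satisfying `λ(X_H) = -H`, `φinv t = (φ_H^t)⁻¹` with conformal exponent `g`
(`(φ_H^t)⁻¹ *λ = e^{g_t} λ`), and `γ̄(t) = φinv t (γ t)` with velocity
`dγ̄/dt = d(φ_H^t)⁻¹(γ̇ - X_H(t,γ))`.  Then
`λ(dγ̄/dt) = e^{g_t(γ t)} (λ(γ̇) + H(t,γ))`, and consequently `γ` satisfies
`λ(γ̇) + H(t,γ) = 0` on `[0,1]` iff `γ̄` is horizontal, i.e. `λ(dγ̄/dt) = 0` on `[0,1]`. -/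
theorem stmt_5 {E : Type*} [NormedAddCommGroup E] [NormedSpace ℝ E]
    (lam : E → (E →L[ℝ] ℝ)) (H : ℝ → E → ℝ) (X : ℝ → E → E)
    (φinv : ℝ → E → E) (g : ℝ → E → ℝ) (γ γ' : ℝ → E)
    (hXH : ∀ t x, lam x (X t x) = -(H t x))
    (hpull : ∀ t (x v : E),
      lam (φinv t x) (fderiv ℝ (φinv t) x v) = Real.exp (g t x) * lam x v)
    (hγ : ∀ t, HasDerivAt γ (γ' t) t)
    (hbar : ∀ t, HasDerivAt (fun s => φinv s (γ s))
      (fderiv ℝ (φinv t) (γ t) (γ' t - X t (γ t))) t) :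
    (∀ t, lam (φinv t (γ t)) (fderiv ℝ (φinv t) (γ t) (γ' t - X t (γ t)))
        = Real.exp (g t (γ t)) * (lam (γ t) (γ' t) + H t (γ t)))
    ∧ ((∀ t ∈ Set.Icc (0:ℝ) 1, lam (γ t) (γ' t) + H t (γ t) = 0)
        ↔ (∀ t ∈ Set.Icc (0:ℝ) 1,
            lam (φinv t (γ t)) (fderiv ℝ (φinv t) (γ t) (γ' t - X t (γ t))) = 0)) := by
  have key : ∀ t, lam (φinv t (γ t)) (fderiv ℝ (φinv t) (γ t) (γ' t - X t (γ t)))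
      = Real.exp (g t (γ t)) * (lam (γ t) (γ' t) + H t (γ t)) := by
    intro t
    rw [hpull t (γ t) (γ' t - X t (γ t)), map_sub, hXH]
    ring
  refine ⟨key, ?_⟩
  constructor
  · intro h t ht
    rw [key t, h t ht, mul_zero]
  · intro h t ht
    have := h t ht
    rw [key t] at this
    rcases mul_eq_zero.1 this with h0 | h0
    · exact absurd h0 (Real.exp_ne_zero _)
    · exact h0
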